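/- Suppose a family of functions u^ε : [0,T] × ℝ^{2n} → ℝ (indexed by ε ∈ (0,1)) satisfies the uniform bound |u^ε(t,x̃,x̄)| ≤ C and the uniform modulus estimate |u^ε(t,x̃,x̄) − u^ε(s,x̃',x̄')| ≤ C((1+|x̃|+|x̄|)√|t−s| + |x̃−x̃'| + √ε |x̄−x̄'|) for all t,s ∈ [0,T] and (x̃,x̄),(x̃',x̄') ∈ ℝⁿ×ℝⁿ, where C is independent of ε. Then there exist a sequence ε_m ↓ 0 and a bounded continuous function ũ* : [0,T] × ℝⁿ → ℝ such that u^{ε_m}(t,x̃,x̄) → ũ*(t,x̃) for every (t,x̃,x̄), with uniform convergence on compact subsets of [0,T] × ℝ^{2n}; moreover ũ* satisfies |ũ*(t,x̃) − ũ*(s,x̃')| ≤ C((1+|x̃|)√|t−s| + |x̃−x̃'|). -/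

import Mathlib

/-! The modulus estimate, with `√ε ≤ 1`, makes the family `u^ε` equicontinuous on
`[0,T] × ℝⁿ × ℝⁿ` with an `ε`-independent modulus. Bounded values allow extracting a subsequence
converging on a countable dense set (compactness of a countable product of intervals), and
equicontinuity propagates the convergence to every point and, by Arzelà–Ascoli, makes it uniform
on compacts. The limit forgets `x̄` because `|u^ε(t,x̃,x̄) - u^ε(t,x̃,0)| ≤ C √ε |x̄| → 0`;
its bound and modulus pass to the limit from those of `u^ε` at `x̄ = x̄' = 0`. -/

open Filter Set Topology TopologicalSpace

namespace Metric

variable {ι X α : Type*} [TopologicalSpace X] [PseudoMetricSpace α]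

theorem equicontinuousWithinAt_of_continuity_modulus {S : Set X} {x₀ : X} (b : X → ℝ)
    (b_lim : Tendsto b (𝓝[S] x₀) (𝓝 0)) (F : ι → X → α)
    (H : ∀ᶠ x in 𝓝[S] x₀, ∀ i, dist (F i x₀) (F i x) ≤ b x) :
    EquicontinuousWithinAt F S x₀ := by
  intro U hU
  obtain ⟨ε, ε0, hεU⟩ := mem_uniformity_dist.mp hU
  filter_upwards [b_lim (Iio_mem_nhds ε0), H] with x hbx hFx i
  exact hεU ((hFx i).trans_lt hbx)

end Metric

section Extraction

variable {X α : Type*} [TopologicalSpace X] [PseudoMetricSpace α]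

theorem EquicontinuousWithinAt.cauchySeq_of_mem_closure {F : ℕ → X → α} {S s : Set X} {x : X}
    (hF : EquicontinuousWithinAt F S x) (hsS : s ⊆ S) (hx : x ∈ closure s)
    (hs : ∀ y ∈ s, CauchySeq (F · y)) : CauchySeq (F · x) := by
  rw [Metric.cauchySeq_iff']
  intro ε ε0
  have : (𝓝[s] x).NeBot := mem_closure_iff_nhdsWithin_neBot.mp hx
  obtain ⟨y, hys, hxy⟩ : ∃ y ∈ s, ∀ i, dist (F i x) (F i y) < ε / 3 :=
    ((eventually_mem_nhdsWithin.and <|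
      (hF _ (Metric.dist_mem_uniformity (by positivity))).filter_mono
        (nhdsWithin_mono x hsS))).exists
  obtain ⟨N, hN⟩ := Metric.cauchySeq_iff'.mp (hs y hys) (ε / 3) (by positivity)
  refine ⟨N, fun n hn => ?_⟩
  calc dist (F n x) (F N x)
        ≤ dist (F n x) (F n y) + dist (F n y) (F N y) + dist (F N y) (F N x) :=
          dist_triangle4 _ _ _ _
    _ < ε / 3 + ε / 3 + ε / 3 := by
        gcongr
        · exact hxy n
        · exact hN n hn
        · rw [dist_comm]; exact hxy N
    _ = ε := by ring

theorem EquicontinuousOn.exists_strictMono_tendsto [PseudoMetrizableSpace X] [CompleteSpace α]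
    {F : ℕ → X → α} {S : Set X} {K : Set α} (hF : EquicontinuousOn F S) (hS : IsSeparable S)
    (hK : IsCompact K) (hFK : ∀ k, ∀ x ∈ S, F k x ∈ K) :
    ∃ φ : ℕ → ℕ, StrictMono φ ∧ ∀ x ∈ S, ∃ a, Tendsto (fun m => F (φ m) x) atTop (𝓝 a) := by
  obtain ⟨t, htS, htc, hSt⟩ := hS.exists_countable_dense_subset
  have := htc.to_subtype
  obtain ⟨_, -, φ, hφ, hlim⟩ := (isCompact_univ_pi fun _ : t => hK).tendsto_subseq
    (x := fun k (y : t) => F k y) fun k y _ => hFK k y (htS y.2)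
  have hcauchy (y) (hy : y ∈ t) : CauchySeq fun m => F (φ m) y :=
    (tendsto_pi_nhds.mp hlim ⟨y, hy⟩).cauchySeq
  exact ⟨φ, hφ, fun x hx => cauchySeq_tendsto_of_complete <|
    ((hF x hx).comp φ).cauchySeq_of_mem_closure htS (hSt hx) hcauchy⟩

end Extraction

theorem EquicontinuousOn.tendstoUniformlyOn_of_tendsto {ι X α : Type*} [TopologicalSpace X]
    [UniformSpace α] {F : ι → X → α} {f : X → α} {l : Filter ι} {K : Set X} (hK : IsCompact K)
    (hF : EquicontinuousOn F K) (h : ∀ x ∈ K, Tendsto (F · x) l (𝓝 (f x))) :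
    TendstoUniformlyOn F f l K := by
  have := (EquicontinuousOn.tendsto_uniformOnFun_iff_pi' (𝔖 := {K}) (by simpa using hK)
    (by simpa using hF) l f).mpr ?_
  · exact UniformOnFun.tendsto_iff_tendstoUniformlyOn.mp this K rfl
  · simpa [tendsto_pi_nhds] using h

section ParabolicModulus

variable {E : Type*} [NormedAddCommGroup E] {T C : ℝ} {u : ℝ → ℝ → E → E → ℝ}

theorem equicontinuousOn_of_parabolic_modulus (hC : 0 ≤ C)
    (hmod : ∀ ε ∈ Ioo (0:ℝ) 1, ∀ t ∈ Icc 0 T, ∀ s ∈ Icc 0 T, ∀ xt xb xt' xb',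
      |u ε t xt xb - u ε s xt' xb'| ≤
        C * ((1 + ‖xt‖ + ‖xb‖) * Real.sqrt |t - s| + ‖xt - xt'‖ +
          Real.sqrt ε * ‖xb - xb'‖)) :
    EquicontinuousOn (fun (ε : Ioo (0:ℝ) 1) (q : ℝ × E × E) => u ε q.1 q.2.1 q.2.2)
      (Icc 0 T ×ˢ univ) := by
  rintro ⟨t, x, y⟩ ⟨ht, -⟩
  set b : ℝ × E × E → ℝ := fun q =>
    C * ((1 + ‖x‖ + ‖y‖) * Real.sqrt |t - q.1| + ‖x - q.2.1‖ + ‖y - q.2.2‖)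
  have hb : Tendsto b (𝓝 (t, x, y)) (𝓝 0) := by
    simpa [b] using (show Continuous b by fun_prop).tendsto (t, x, y)
  refine Metric.equicontinuousWithinAt_of_continuity_modulus b (hb.mono_left nhdsWithin_le_nhds)
    _ (eventually_mem_nhdsWithin.mono fun q hq ε => ?_)
  have hsqrt : Real.sqrt ε ≤ 1 := Real.sqrt_le_one.mpr ε.2.2.le
  refine (hmod ε ε.2 t ht q.1 hq.1 x y q.2.1 q.2.2).trans (mul_le_mul_of_nonneg_left ?_ hC)
  gcongr
  exact mul_le_of_le_one_left (norm_nonneg _) hsqrt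

theorem tendsto_of_tendsto_fast_variable_zero
    (hmod : ∀ ε ∈ Ioo (0:ℝ) 1, ∀ t ∈ Icc 0 T, ∀ s ∈ Icc 0 T, ∀ xt xb xt' xb',
      |u ε t xt xb - u ε s xt' xb'| ≤
        C * ((1 + ‖xt‖ + ‖xb‖) * Real.sqrt |t - s| + ‖xt - xt'‖ +
          Real.sqrt ε * ‖xb - xb'‖))
    {ε : ℕ → ℝ} (hε : ∀ m, ε m ∈ Ioo (0:ℝ) 1) (hε0 : Tendsto ε atTop (𝓝 0))
    {t : ℝ} (ht : t ∈ Icc 0 T) (x y : E) {L : ℝ}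
    (h : Tendsto (fun m => u (ε m) t x 0) atTop (𝓝 L)) :
    Tendsto (fun m => u (ε m) t x y) atTop (𝓝 L) := by
  refine h.congr_dist (squeeze_zero (fun _ => dist_nonneg) (fun m => ?_)
    (by simpa using (hε0.sqrt.mul_const ‖y‖).const_mul C))
  simpa [Real.dist_eq] using hmod (ε m) (hε m) t ht t ht x 0 x y

end ParabolicModulus

theorem stmt_4_general (n : ℕ) (T C : ℝ) (hC : 0 < C)
    (u : ℝ → ℝ → EuclideanSpace ℝ (Fin n) → EuclideanSpace ℝ (Fin n) → ℝ)
    (hbdd : ∀ ε ∈ Ioo (0:ℝ) 1, ∀ t ∈ Icc 0 T, ∀ xt xb, |u ε t xt xb| ≤ C)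
    (hmod : ∀ ε ∈ Ioo (0:ℝ) 1, ∀ t ∈ Icc 0 T, ∀ s ∈ Icc 0 T, ∀ xt xb xt' xb',
      |u ε t xt xb - u ε s xt' xb'| ≤
        C * ((1 + ‖xt‖ + ‖xb‖) * Real.sqrt |t - s| + ‖xt - xt'‖ +
          Real.sqrt ε * ‖xb - xb'‖)) :
    ∃ (εm : ℕ → ℝ) (ustar : ℝ → EuclideanSpace ℝ (Fin n) → ℝ),
      (∀ m, εm m ∈ Ioo (0:ℝ) 1) ∧ StrictAnti εm ∧ Tendsto εm atTop (nhds 0) ∧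
      (∀ t ∈ Icc 0 T, ∀ xt, |ustar t xt| ≤ C) ∧
      ContinuousOn (fun q : ℝ × EuclideanSpace ℝ (Fin n) => ustar q.1 q.2)
        (Icc 0 T ×ˢ univ) ∧
      (∀ t ∈ Icc 0 T, ∀ s ∈ Icc 0 T, ∀ xt xt',
        |ustar t xt - ustar s xt'| ≤
          C * ((1 + ‖xt‖) * Real.sqrt |t - s| + ‖xt - xt'‖)) ∧
      (∀ t ∈ Icc 0 T, ∀ xt xb,
        Tendsto (fun m => u (εm m) t xt xb) atTop (nhds (ustar t xt))) ∧
      (∀ K : Set (ℝ × EuclideanSpace ℝ (Fin n) × EuclideanSpace ℝ (Fin n)),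
        IsCompact K → K ⊆ Icc 0 T ×ˢ (univ : Set _) →
        TendstoUniformlyOn (fun m q => u (εm m) q.1 q.2.1 q.2.2)
          (fun q => ustar q.1 q.2.1) atTop K) := by
  obtain ⟨δ, hδanti, hδmem, hδ0⟩ := exists_seq_strictAnti_tendsto' (zero_lt_one' ℝ)
  have hequi := equicontinuousOn_of_parabolic_modulus hC.le hmod
  obtain ⟨φ, hφ, hex⟩ := (hequi.comp fun k => ⟨δ k, hδmem k⟩).exists_strictMono_tendsto
    (.of_separableSpace _) isCompact_Icc fun k q hq => abs_le.mp (hbdd _ (hδmem k) _ hq.1 _ _)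
  set εm := δ ∘ φ
  set ustar := fun t x => limUnder atTop fun m => u (εm m) t x 0
  have hconv : ∀ t ∈ Icc 0 T, ∀ xt xb,
      Tendsto (fun m => u (εm m) t xt xb) atTop (𝓝 (ustar t xt)) := fun t ht x y =>
    tendsto_of_tendsto_fast_variable_zero hmod (fun m => hδmem (φ m))
      (hδ0.comp hφ.tendsto_atTop) ht x y (tendsto_nhds_limUnder (hex (t, x, 0) ⟨ht, trivial⟩))
  have hequiεm := hequi.comp fun m => ⟨εm m, hδmem (φ m)⟩
  refine ⟨εm, ustar, fun m => hδmem (φ m), hδanti.comp_strictMono hφ,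
    hδ0.comp hφ.tendsto_atTop, fun t ht x => ?_, ?_, fun t ht s hs x x' => ?_, hconv,
    fun K hK hKD => (hequiεm.mono hKD).tendstoUniformlyOn_of_tendsto hK
      fun q hq => hconv _ (hKD hq).1 _ _⟩
  · exact le_of_tendsto' (hconv t ht x 0).abs fun m => hbdd _ (hδmem (φ m)) t ht x 0
  · have hcont : ContinuousOn (fun q : ℝ × EuclideanSpace ℝ (Fin n) × EuclideanSpace ℝ (Fin n) =>
        ustar q.1 q.2.1) (Icc 0 T ×ˢ univ) :=
      Filter.Tendsto.continuousOn_of_equicontinuousOn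
        (fun q hq => hconv q.1 hq.1 q.2.1 q.2.2) hequiεm
    exact hcont.comp (f := fun q : ℝ × EuclideanSpace ℝ (Fin n) => (q.1, q.2, 0))
      (Continuous.continuousOn (by fun_prop)) fun q hq => ⟨hq.1, mem_univ 0⟩
  · exact le_of_tendsto' ((hconv t ht x 0).sub (hconv s hs x' 0)).abs fun m => by
      simpa using hmod (εm m) (hδmem (φ m)) t ht s hs x 0 x' 0

/-- Arzelà–Ascoli extraction for the family `u^ε`: a subsequence converges, locally
uniformly, to a bounded continuous limit independent of the fast variable `x̄`. -/
theorem stmt_4 (n : ℕ) (T C : ℝ) (hT : 0 < T) (hC : 0 < C)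
    (u : ℝ → ℝ → EuclideanSpace ℝ (Fin n) → EuclideanSpace ℝ (Fin n) → ℝ)
    (hbdd : ∀ ε ∈ Ioo (0:ℝ) 1, ∀ t ∈ Icc 0 T, ∀ xt xb, |u ε t xt xb| ≤ C)
    (hmod : ∀ ε ∈ Ioo (0:ℝ) 1, ∀ t ∈ Icc 0 T, ∀ s ∈ Icc 0 T, ∀ xt xb xt' xb',
      |u ε t xt xb - u ε s xt' xb'| ≤
        C * ((1 + ‖xt‖ + ‖xb‖) * Real.sqrt |t - s| + ‖xt - xt'‖ +
          Real.sqrt ε * ‖xb - xb'‖)) :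
    ∃ (εm : ℕ → ℝ) (ustar : ℝ → EuclideanSpace ℝ (Fin n) → ℝ),
      (∀ m, εm m ∈ Ioo (0:ℝ) 1) ∧ StrictAnti εm ∧ Tendsto εm atTop (nhds 0) ∧
      (∀ t ∈ Icc 0 T, ∀ xt, |ustar t xt| ≤ C) ∧
      ContinuousOn (fun q : ℝ × EuclideanSpace ℝ (Fin n) => ustar q.1 q.2)
        (Icc 0 T ×ˢ univ) ∧
      (∀ t ∈ Icc 0 T, ∀ s ∈ Icc 0 T, ∀ xt xt',
        |ustar t xt - ustar s xt'| ≤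
          C * ((1 + ‖xt‖) * Real.sqrt |t - s| + ‖xt - xt'‖)) ∧
      (∀ t ∈ Icc 0 T, ∀ xt xb,
        Tendsto (fun m => u (εm m) t xt xb) atTop (nhds (ustar t xt))) ∧
      (∀ K : Set (ℝ × EuclideanSpace ℝ (Fin n) × EuclideanSpace ℝ (Fin n)),
        IsCompact K → K ⊆ Icc 0 T ×ˢ (univ : Set _) →
        TendstoUniformlyOn (fun m q => u (εm m) q.1 q.2.1 q.2.2)
          (fun q => ustar q.1 q.2.1) atTop K) :=
  stmt_4_general n T C hC u hbdd hmod
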